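/- arXiv:1001.0451 — 6 statements merged into one kernel-verified Lean document; each statement's English description precedes it below -/
import Mathlib

section
/- Let (M,d,+) be a metric semigroup, m ∈ ℕ, u, v ∈ M, and u_1,…,u_m, v_1,…,v_m ∈ M. If (Σ over even indices j ∈ {2,…,m} of u_j) + u + (Σ over odd indices j ∈ {1,…,m} of v_j) = (Σ over even indices j of v_j) + v + (Σ over odd indices j of u_j), then d(u,v) ≤ Σ_{j=1}^m d(u_j, v_j). -/
private lemma dist_sum_le {M : Type*} [MetricSpace M] [AddCommMonoid M]
    (hd : ∀ u v w : M, dist (u + w) (v + w) = dist u v)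
    (s : Finset ℕ) (f g : ℕ → M) :
    dist (∑ x ∈ s, f x) (∑ x ∈ s, g x) ≤ ∑ x ∈ s, dist (f x) (g x) := by
  induction s using Finset.induction with
  | empty => simp
  | @insert a s ha ih =>
    rw [Finset.sum_insert ha, Finset.sum_insert ha, Finset.sum_insert ha]
    calc dist (f a + ∑ x ∈ s, f x) (g a + ∑ x ∈ s, g x)
        ≤ dist (f a + ∑ x ∈ s, f x) (g a + ∑ x ∈ s, f x)
          + dist (g a + ∑ x ∈ s, f x) (g a + ∑ x ∈ s, g x) := dist_triangle _ _ _
      _ = dist (f a) (g a) + dist (∑ x ∈ s, f x) (∑ x ∈ s, g x) := by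
          rw [hd]
          congr 1
          rw [add_comm (g a) (∑ x ∈ s, f x), add_comm (g a) (∑ x ∈ s, g x), hd]
      _ ≤ dist (f a) (g a) + ∑ x ∈ s, dist (f x) (g x) := by linarith

private lemma split_sum {M : Type*} [AddCommMonoid M] (m : ℕ) (P Q : ℕ → M) :
    (∑ j ∈ (Finset.Icc 1 m).filter (fun j => Even j), P j) +
      (∑ j ∈ (Finset.Icc 1 m).filter (fun j => Odd j), Q j) =
    ∑ j ∈ Finset.Icc 1 m, (if Even j then P j else Q j) := by
  rw [← Finset.sum_filter_add_sum_filter_not (Finset.Icc 1 m) (fun j => Even j)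
    (fun j => if Even j then P j else Q j)]
  congr 1
  · exact Finset.sum_congr rfl fun x hx => by
      simp only [Finset.mem_filter] at hx; simp [hx.2]
  · rw [show ((Finset.Icc 1 m).filter (fun j => Odd j)) =
        ((Finset.Icc 1 m).filter (fun j => ¬ Even j)) by
      simp [Nat.not_even_iff_odd]]
    exact Finset.sum_congr rfl fun x hx => by
      simp only [Finset.mem_filter] at hx; simp [hx.2]

theorem stmt_7 {M : Type*} [MetricSpace M] [AddCommMonoid M]
    (hd : ∀ u v w : M, dist (u + w) (v + w) = dist u v)
    (m : ℕ) (u v : M) (U V : ℕ → M)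
    (h : (∑ j ∈ (Finset.Icc 1 m).filter (fun j => Even j), U j) + u +
          (∑ j ∈ (Finset.Icc 1 m).filter (fun j => Odd j), V j) =
         (∑ j ∈ (Finset.Icc 1 m).filter (fun j => Even j), V j) + v +
          (∑ j ∈ (Finset.Icc 1 m).filter (fun j => Odd j), U j)) :
    dist u v ≤ ∑ j ∈ Finset.Icc 1 m, dist (U j) (V j) := by
  set A := ∑ j ∈ (Finset.Icc 1 m).filter (fun j => Even j), U j with hA
  set B := ∑ j ∈ (Finset.Icc 1 m).filter (fun j => Odd j), V j with hB
  set C := ∑ j ∈ (Finset.Icc 1 m).filter (fun j => Even j), V j with hC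
  set D := ∑ j ∈ (Finset.Icc 1 m).filter (fun j => Odd j), U j with hD
  have key : dist u v = dist (C + D) (A + B) := by
    calc dist u v = dist (u + (A + B)) (v + (A + B)) := (hd _ _ _).symm
      _ = dist ((C + D) + v) ((A + B) + v) := by
          rw [show u + (A + B) = A + u + B by abel, h,
            show C + v + D = (C + D) + v by abel, show v + (A + B) = (A + B) + v by abel]
      _ = dist (C + D) (A + B) := hd _ _ _
  have hfs : C + D = ∑ j ∈ Finset.Icc 1 m, (if Even j then V j else U j) := by
    rw [hC, hD]; exact split_sum m V U
  have hgs : A + B = ∑ j ∈ Finset.Icc 1 m, (if Even j then U j else V j) := by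
    rw [hA, hB]; exact split_sum m U V
  rw [key, hfs, hgs]
  calc dist (∑ j ∈ Finset.Icc 1 m, (if Even j then V j else U j))
        (∑ j ∈ Finset.Icc 1 m, (if Even j then U j else V j))
      ≤ ∑ j ∈ Finset.Icc 1 m, dist (if Even j then V j else U j)
          (if Even j then U j else V j) := dist_sum_le hd _ _ _
    _ = ∑ j ∈ Finset.Icc 1 m, dist (U j) (V j) := by
        refine Finset.sum_congr rfl fun x _ => ?_
        by_cases hx : Even x <;> simp [hx, dist_comm]
end

section
/- Let M be a commutative monoid, h : {0,1}^n → M, and γ ∈ {0,1}^n with |γ| even. Then Σ over even α ≤ γ of (Σ over even θ ≤ α of h(θ)) equals h(γ) + Σ over odd α ≤ γ of (Σ over even θ ≤ α of h(θ)). -/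
open Finset

-- swap double filtered sum into coefficient form
lemma swap_sum {A B M : Type*} [AddCommMonoid M] [Fintype A] [Fintype B] [DecidableEq B]
    (p : A → Prop) (q : A → B → Prop) [DecidablePred p] [∀ a, DecidablePred (q a)]
    (f : B → M) :
    ∑ a ∈ univ.filter p, ∑ b ∈ univ.filter (q a), f b
      = ∑ b : B, (univ.filter (fun a => p a ∧ q a b)).card • f b := by
  simp only [Finset.sum_filter]
  have step : ∀ a : A, (if p a then ∑ b : B, (if q a b then f b else 0) else 0)
      = ∑ b : B, (if p a ∧ q a b then f b else 0) := by
    intro a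
    by_cases hp : p a
    · simp [hp]
    · simp [hp]
  rw [Finset.sum_congr rfl fun a _ => step a, Finset.sum_comm]
  refine Finset.sum_congr rfl fun b _ => ?_
  rw [← Finset.sum_filter, Finset.sum_const]

-- parity counts in powerset of a nonempty finset are equal
lemma parity_count {A : Type*} [DecidableEq A] (s : Finset A) (hs : s.Nonempty) :
    ((s.powerset).filter fun t => Even t.card).card
      = ((s.powerset).filter fun t => Odd t.card).card := by
  have h0 := Finset.sum_powerset_neg_one_pow_card_of_nonempty hs
  rw [← Finset.sum_filter_add_sum_filter_not s.powerset (fun t => Even t.card)] at h0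
  have h1 : ∀ t ∈ (s.powerset).filter fun t => Even t.card, ((-1 : ℤ)) ^ t.card = 1 := by
    intro t ht; exact Even.neg_one_pow (Finset.mem_filter.1 ht).2
  have h2 : ∀ t ∈ (s.powerset).filter fun t => ¬ Even t.card, ((-1 : ℤ)) ^ t.card = -1 := by
    intro t ht
    exact Odd.neg_one_pow (Nat.not_even_iff_odd.1 (Finset.mem_filter.1 ht).2)
  rw [Finset.sum_congr rfl h1, Finset.sum_congr rfl h2, Finset.sum_const, Finset.sum_const] at h0
  simp only [nsmul_eq_mul, mul_one, mul_neg_one] at h0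
  have := sub_eq_zero.mp (by linarith [h0] : ((((s.powerset).filter fun t => Even t.card).card : ℤ) - ((s.powerset).filter (fun t => ¬ Even t.card)).card) = 0)
  have hcast : (((s.powerset).filter fun t => Even t.card).card : ℤ) = (((s.powerset).filter fun t => ¬ Even t.card).card : ℤ) := this
  have := Int.natCast_inj.mp hcast
  rw [this]
  simp only [Nat.not_even_iff_odd]


lemma interval_count {A : Type*} [DecidableEq A] [Fintype A] (θ γ : Finset A)
    (hθγ : θ ⊆ γ) (P : ℕ → Prop) [DecidablePred P] :
    ((univ : Finset (Finset A)).filter (fun α => θ ⊆ α ∧ α ⊆ γ ∧ P α.card)).card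
      = ((γ \ θ).powerset.filter (fun t => P (t.card + θ.card))).card := by
  apply Finset.card_bij' (fun α _ => α \ θ) (fun t _ => t ∪ θ)
  · intro α hα
    simp only [Finset.mem_filter, Finset.mem_univ, true_and] at hα
    obtain ⟨h1, h2, h3⟩ := hα
    have hc : (α \ θ).card + θ.card = α.card := by
      rw [Finset.card_sdiff_of_subset h1, Nat.sub_add_cancel (Finset.card_le_card h1)]
    simp only [Finset.mem_filter, Finset.mem_powerset]
    exact ⟨Finset.sdiff_subset_sdiff h2 Finset.Subset.rfl, by rw [hc]; exact h3⟩
  · intro t ht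
    simp only [Finset.mem_filter, Finset.mem_powerset] at ht
    obtain ⟨h1, h2⟩ := ht
    have hd : Disjoint t θ := Finset.disjoint_of_subset_left h1 Finset.sdiff_disjoint
    simp only [Finset.mem_filter, Finset.mem_univ, true_and]
    refine ⟨Finset.subset_union_right,
      Finset.union_subset (h1.trans Finset.sdiff_subset) hθγ, ?_⟩
    rw [Finset.card_union_of_disjoint hd]
    exact h2
  · intro α hα
    simp only [Finset.mem_filter, Finset.mem_univ, true_and] at hα
    exact Finset.sdiff_union_of_subset hα.1
  · intro t ht
    simp only [Finset.mem_filter, Finset.mem_powerset] at ht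
    exact Finset.union_sdiff_cancel_right
      (Finset.disjoint_of_subset_left ht.1 Finset.sdiff_disjoint)

lemma coeff {A : Type*} [DecidableEq A] [Fintype A] (γ θ : Finset A) (hγ : Even γ.card) :
    ((univ : Finset (Finset A)).filter
        (fun α => (α ⊆ γ ∧ Even α.card) ∧ θ ⊆ α ∧ Even θ.card)).card
      = (if θ = γ then 1 else 0) +
        ((univ : Finset (Finset A)).filter
          (fun α => (α ⊆ γ ∧ Odd α.card) ∧ θ ⊆ α ∧ Even θ.card)).card := by
  by_cases hgood : θ ⊆ γ ∧ Even θ.card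
  · obtain ⟨hθγ, hθe⟩ := hgood
    by_cases heq : θ = γ
    · subst heq
      rw [if_pos rfl]
      have hE : (univ : Finset (Finset A)).filter
          (fun α => (α ⊆ θ ∧ Even α.card) ∧ θ ⊆ α ∧ Even θ.card) = {θ} := by
        ext α
        simp only [Finset.mem_filter, Finset.mem_univ, true_and, Finset.mem_singleton]
        constructor
        · rintro ⟨⟨h1, -⟩, h2, -⟩; exact Finset.Subset.antisymm h1 h2
        · rintro rfl; exact ⟨⟨Finset.Subset.rfl, hγ⟩, Finset.Subset.rfl, hγ⟩
      have hO : (univ : Finset (Finset A)).filter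
          (fun α => (α ⊆ θ ∧ Odd α.card) ∧ θ ⊆ α ∧ Even θ.card) = ∅ := by
        ext α
        simp only [Finset.mem_filter, Finset.mem_univ, true_and, Finset.notMem_empty,
          iff_false]
        rintro ⟨⟨h1, ho⟩, h2, -⟩
        exact (Nat.not_even_iff_odd.2 ho) (Finset.Subset.antisymm h1 h2 ▸ hγ)
      rw [hE, hO]; simp
    · rw [if_neg heq, zero_add]
      have hrw : ∀ (P : ℕ → Prop) (_ : DecidablePred P),
          (univ : Finset (Finset A)).filter
              (fun α => (α ⊆ γ ∧ P α.card) ∧ θ ⊆ α ∧ Even θ.card)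
            = (univ : Finset (Finset A)).filter
              (fun α => θ ⊆ α ∧ α ⊆ γ ∧ P α.card) := by
        intro P _
        ext α
        simp only [Finset.mem_filter, Finset.mem_univ, true_and]
        exact ⟨fun x => ⟨x.2.1, x.1.1, x.1.2⟩, fun ⟨c, a, b⟩ => ⟨⟨a, b⟩, c, hθe⟩⟩
      rw [hrw _ inferInstance, hrw _ inferInstance,
        interval_count θ γ hθγ, interval_count θ γ hθγ]
      have hpe : ∀ t : Finset A, Even (t.card + θ.card) ↔ Even t.card := by
        intro t; simp [Nat.even_add, hθe]
      have hpo : ∀ t : Finset A, Odd (t.card + θ.card) ↔ Odd t.card := by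
        intro t
        rw [← Nat.not_even_iff_odd, ← Nat.not_even_iff_odd, hpe]
      have hne : (γ \ θ).Nonempty := by
        rw [Finset.sdiff_nonempty]
        exact fun hc => heq (Finset.Subset.antisymm hθγ hc)
      calc ((γ \ θ).powerset.filter (fun t => Even (t.card + θ.card))).card
          = ((γ \ θ).powerset.filter (fun t => Even t.card)).card := by
            simp only [hpe]
        _ = ((γ \ θ).powerset.filter (fun t => Odd t.card)).card :=
            parity_count _ hne
        _ = ((γ \ θ).powerset.filter (fun t => Odd (t.card + θ.card))).card := by
            simp only [hpo]
  · have heq : θ ≠ γ := by rintro rfl; exact hgood ⟨Finset.Subset.rfl, hγ⟩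
    rw [if_neg heq, zero_add]
    have hz : ∀ (P : ℕ → Prop) (_ : DecidablePred P),
        (univ : Finset (Finset A)).filter
            (fun α => (α ⊆ γ ∧ P α.card) ∧ θ ⊆ α ∧ Even θ.card) = ∅ := by
      intro P _
      ext α
      simp only [Finset.mem_filter, Finset.mem_univ, true_and, Finset.notMem_empty, iff_false]
      rintro ⟨⟨h1, -⟩, h2, h3⟩
      exact hgood ⟨h2.trans h1, h3⟩
    rw [hz _ inferInstance, hz _ inferInstance]

theorem stmt_9 {M : Type*} [AddCommMonoid M] (n : ℕ)
    (h : Finset (Fin n) → M) (γ : Finset (Fin n)) (hγ : Even γ.card) :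
    (∑ α ∈ (Finset.univ : Finset (Finset (Fin n))).filter
        (fun α => α ⊆ γ ∧ Even α.card),
      ∑ θ ∈ (Finset.univ : Finset (Finset (Fin n))).filter
        (fun θ => θ ⊆ α ∧ Even θ.card), h θ) =
    h γ + (∑ α ∈ (Finset.univ : Finset (Finset (Fin n))).filter
        (fun α => α ⊆ γ ∧ Odd α.card),
      ∑ θ ∈ (Finset.univ : Finset (Finset (Fin n))).filter
        (fun θ => θ ⊆ α ∧ Even θ.card), h θ) := by
  rw [swap_sum (fun α => α ⊆ γ ∧ Even α.card) (fun α θ => θ ⊆ α ∧ Even θ.card) h,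
    swap_sum (fun α => α ⊆ γ ∧ Odd α.card) (fun α θ => θ ⊆ α ∧ Even θ.card) h]
  have hγterm : h γ = ∑ θ : Finset (Fin n), (if θ = γ then 1 else 0) • h θ := by
    simp [ite_smul]
  rw [hγterm, ← Finset.sum_add_distrib]
  refine Finset.sum_congr rfl fun θ _ => ?_
  rw [coeff γ θ hγ, add_smul]
end

section
/- Let M be a commutative monoid, h : {0,1}^n → M, and γ ∈ {0,1}^n with |γ| even. Then Σ over odd α ≤ γ of (Σ over odd θ ≤ α of h(θ)) equals Σ over even α ≤ γ of (Σ over odd θ ≤ α of h(θ)). -/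
open Finset

lemma count_eq {n : ℕ} (γ θ : Finset (Fin n)) (hθγ : θ ⊆ γ) (hθ : Odd θ.card)
    (hγ : Even γ.card) :
    ((univ : Finset (Finset (Fin n))).filter
        (fun α => θ ⊆ α ∧ α ⊆ γ ∧ Odd α.card)).card =
    ((univ : Finset (Finset (Fin n))).filter
        (fun α => θ ⊆ α ∧ α ⊆ γ ∧ Even α.card)).card := by
  have hne : θ ≠ γ := by
    rintro rfl
    exact (Nat.not_even_iff_odd.mpr hθ) hγ
  obtain ⟨i, hiγ, hiθ⟩ : ∃ i, i ∈ γ ∧ i ∉ θ := by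
    by_contra hc
    push_neg at hc
    exact hne (Finset.Subset.antisymm hθγ hc)
  have main : ∀ α : Finset (Fin n), θ ⊆ α → α ⊆ γ →
      θ ⊆ (if i ∈ α then α.erase i else insert i α) ∧
      (if i ∈ α then α.erase i else insert i α) ⊆ γ ∧
      ((if i ∈ α then α.erase i else insert i α).card = α.card - 1 ∧ 1 ≤ α.card
        ∨ (if i ∈ α then α.erase i else insert i α).card = α.card + 1) := by
    intro α h1 h2
    by_cases hi : i ∈ α <;> simp only [hi, if_true, if_false]
    · exact ⟨fun x hx => Finset.mem_erase.mpr ⟨fun he => hiθ (he ▸ hx), h1 hx⟩,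
        (Finset.erase_subset _ _).trans h2,
        Or.inl ⟨Finset.card_erase_of_mem hi, Finset.card_pos.mpr ⟨i, hi⟩⟩⟩
    · exact ⟨h1.trans (Finset.subset_insert _ _), Finset.insert_subset hiγ h2,
        Or.inr (Finset.card_insert_of_notMem hi)⟩
  have inv : ∀ α : Finset (Fin n),
      (if i ∈ (if i ∈ α then α.erase i else insert i α) then
        (if i ∈ α then α.erase i else insert i α).erase i
        else insert i (if i ∈ α then α.erase i else insert i α)) = α := by
    intro α
    by_cases hi : i ∈ α <;>
      simp [hi, Finset.insert_erase, Finset.erase_insert, Finset.notMem_erase]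
  apply Finset.card_bij' (fun α _ => if i ∈ α then α.erase i else insert i α)
    (fun α _ => if i ∈ α then α.erase i else insert i α)
  · intro α _; exact inv α
  · intro α _; exact inv α
  · intro α hα
    simp only [mem_filter, mem_univ, true_and] at hα ⊢
    obtain ⟨h1, h2, h3⟩ := hα
    obtain ⟨g1, g2, g3⟩ := main α h1 h2
    refine ⟨g1, g2, ?_⟩
    obtain ⟨k, hk⟩ := h3
    rcases g3 with ⟨e, hle⟩ | e <;> rw [e]
    · exact ⟨k, by omega⟩
    · exact ⟨k + 1, by omega⟩
  · intro α hα
    simp only [mem_filter, mem_univ, true_and] at hα ⊢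
    obtain ⟨h1, h2, h3⟩ := hα
    obtain ⟨g1, g2, g3⟩ := main α h1 h2
    refine ⟨g1, g2, ?_⟩
    obtain ⟨k, hk⟩ := h3
    rcases g3 with ⟨e, hle⟩ | e <;> rw [e]
    · exact ⟨k - 1, by omega⟩
    · exact ⟨k, by omega⟩

theorem stmt_11 {M : Type*} [AddCommMonoid M] (n : ℕ)
    (h : Finset (Fin n) → M) (γ : Finset (Fin n)) (hγ : Even γ.card) :
    (∑ α ∈ (Finset.univ : Finset (Finset (Fin n))).filter
        (fun α => α ⊆ γ ∧ Odd α.card),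
      ∑ θ ∈ (Finset.univ : Finset (Finset (Fin n))).filter
        (fun θ => θ ⊆ α ∧ Odd θ.card), h θ) =
    (∑ α ∈ (Finset.univ : Finset (Finset (Fin n))).filter
        (fun α => α ⊆ γ ∧ Even α.card),
      ∑ θ ∈ (Finset.univ : Finset (Finset (Fin n))).filter
        (fun θ => θ ⊆ α ∧ Odd θ.card), h θ) := by
  have key : ∀ (p : Finset (Fin n) → Prop) [DecidablePred p],
      (∑ α ∈ (univ : Finset (Finset (Fin n))).filter (fun α => α ⊆ γ ∧ p α),
        ∑ θ ∈ (univ : Finset (Finset (Fin n))).filter (fun θ => θ ⊆ α ∧ Odd θ.card), h θ)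
      = ∑ θ ∈ (univ : Finset (Finset (Fin n))).filter (fun θ => θ ⊆ γ ∧ Odd θ.card),
          ((univ : Finset (Finset (Fin n))).filter
            (fun α => θ ⊆ α ∧ α ⊆ γ ∧ p α)).card • h θ := by
    intro p _
    rw [Finset.sum_comm' (t' := (univ : Finset (Finset (Fin n))).filter
        (fun θ => θ ⊆ γ ∧ Odd θ.card))
      (s' := fun θ => (univ : Finset (Finset (Fin n))).filter
        (fun α => θ ⊆ α ∧ α ⊆ γ ∧ p α))]
    · exact Finset.sum_congr rfl fun θ _ => Finset.sum_const _
    · intro α θ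
      simp only [mem_filter, mem_univ, true_and]
      constructor
      · rintro ⟨⟨h1, h2⟩, h3, h4⟩
        exact ⟨⟨h3, h1, h2⟩, h3.trans h1, h4⟩
      · rintro ⟨⟨h1, h2, h3⟩, h4, h5⟩
        exact ⟨⟨h2, h3⟩, h1, h5⟩
  rw [key (fun α => Odd α.card), key (fun α => Even α.card)]
  refine Finset.sum_congr rfl fun θ hθ => ?_
  simp only [mem_filter, mem_univ, true_and] at hθ
  rw [count_eq γ θ hθ.1 hθ.2 hγ]
end

section
/- Let M be a commutative monoid, h : {0,1}^n → M, and α ∈ {0,1}^n with |1−α| even, where 1 = (1,…,1). Then Σ over even θ ≤ α of h(1−α+θ), plus Σ over odd β ≤ 1−α of (Σ over even θ ≤ α+β of h(θ)), equals Σ over even β ≤ 1−α of (Σ over even θ ≤ α+β of h(θ)). -/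
/-!
Expand both sides as `∑ S, c S • h S`. The coefficients vanish unless `|S|` is even; then the
`β` contributing to `h S` in the double sums are those of the Boolean interval `[S \ α, αᶜ]`.
Since `|αᶜ|` is even, the alternating sum `∑ (-1)^|β|` over that interval is `1` if
`S \ α = αᶜ`, i.e. `αᶜ ⊆ S`, and `0` otherwise, so the even `β` outnumber the odd ones exactly
when `h S` occurs in the first sum, as `h (αᶜ ∪ θ)` with `θ = S ∩ α`.
-/

open Finset

namespace Finset

variable {ι : Type*}

theorem sum_sum_filter_eq_sum_card_nsmul {β M : Type*} [Fintype ι] [AddCommMonoid M]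
    (s : Finset β) (P : β → ι → Prop) [∀ b, DecidablePred (P b)] (f : ι → M) :
    ∑ b ∈ s, ∑ i ∈ univ.filter (P b), f i = ∑ i, #{b ∈ s | P b i} • f i := by
  simp_rw [sum_filter]
  rw [sum_comm]
  exact sum_congr rfl fun i _ => by rw [← sum_filter, sum_const]

variable [DecidableEq ι]

theorem sum_neg_one_pow_eq_card_filter_even_sub_card_filter_odd {β : Type*} (s : Finset β)
    (f : β → ℕ) :
    ∑ b ∈ s, (-1 : ℤ) ^ f b = #{b ∈ s | Even (f b)} - #{b ∈ s | Odd (f b)} := by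
  rw [← sum_filter_add_sum_filter_not s (fun b => Even (f b))]
  simp only [Nat.not_even_iff_odd]
  rw [sum_eq_card_nsmul fun b hb => (mem_filter.1 hb).2.neg_one_pow,
    sum_eq_card_nsmul fun b hb => (mem_filter.1 hb).2.neg_one_pow]
  simp [sub_eq_add_neg]

theorem sum_Icc_neg_one_pow_card (s t : Finset ι) :
    ∑ u ∈ Icc s t, (-1 : ℤ) ^ #u = if s = t then (-1) ^ #t else 0 := by
  by_cases hst : s ⊆ t
  · have hdisj : ∀ u ∈ (t \ s).powerset, Disjoint s u := fun u hu =>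
      disjoint_sdiff.mono_right (mem_powerset.1 hu)
    rw [Icc_eq_image_powerset hst, sum_image fun u hu v hv huv => by
      rw [← union_sdiff_cancel_left (hdisj u hu), huv, union_sdiff_cancel_left (hdisj v hv)]]
    calc ∑ u ∈ (t \ s).powerset, (-1 : ℤ) ^ #(s ∪ u)
        = (-1) ^ #s * ∑ u ∈ (t \ s).powerset, (-1) ^ #u := by
          rw [mul_sum]
          exact sum_congr rfl fun u hu => by rw [card_union_of_disjoint (hdisj u hu), pow_add]
      _ = if s = t then (-1) ^ #t else 0 := by
          rw [sum_powerset_neg_one_pow_card]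
          by_cases hts : t ⊆ s
          · simp [hst.antisymm hts]
          · rw [if_neg (mt sdiff_eq_empty_iff_subset.1 hts), if_neg fun h => hts h.ge, mul_zero]
  · rw [Icc_eq_empty hst, sum_empty, if_neg fun h => hst h.le]

theorem card_filter_even_card_Icc {s t : Finset ι} (ht : Even #t) :
    #{u ∈ Icc s t | Even #u} = #{u ∈ Icc s t | Odd #u} + if s = t then 1 else 0 := by
  have h := sum_Icc_neg_one_pow_card s t
  rw [sum_neg_one_pow_eq_card_filter_even_sub_card_filter_odd, ht.neg_one_pow] at h
  split_ifs at h ⊢ <;> omega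

variable [Fintype ι]

theorem sum_filter_even_compl_union {M : Type*} [AddCommMonoid M] {s : Finset ι}
    (hs : Even #sᶜ) (f : Finset ι → M) :
    ∑ θ ∈ univ.filter (fun θ => θ ⊆ s ∧ Even #θ), f (sᶜ ∪ θ) =
      ∑ u ∈ univ.filter (fun u => sᶜ ⊆ u ∧ Even #u), f u := by
  refine sum_nbij' (sᶜ ∪ ·) (· ∩ s) ?_ ?_ ?_ ?_ fun _ _ => rfl
  · intro θ hθ
    simp only [mem_filter, mem_univ, true_and] at hθ ⊢
    refine ⟨subset_union_left, ?_⟩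
    rw [card_union_of_disjoint (disjoint_compl_left.mono_right hθ.1)]
    exact hs.add hθ.2
  · intro u hu
    simp only [mem_filter, mem_univ, true_and] at hu ⊢
    refine ⟨inter_subset_right, ?_⟩
    have := card_inter_add_card_sdiff u s
    rw [sdiff_eq_inter_compl, inter_eq_right.2 hu.1] at this
    exact (Nat.even_add.1 (this ▸ hu.2)).2 hs
  · intro θ hθ
    simp only [mem_filter, mem_univ, true_and] at hθ
    ext x
    simp only [mem_inter, mem_union, mem_compl]
    have := @hθ.1 x
    tauto
  · intro u hu
    simp only [mem_filter, mem_univ, true_and] at hu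
    ext x
    simp only [mem_inter, mem_union, mem_compl]
    have := @hu.1 x
    simp only [mem_compl] at this
    tauto

theorem filter_filter_subset_union_eq_filter_Icc (α S : Finset ι) (p : ℕ → Prop)
    [DecidablePred p] :
    {β ∈ univ.filter (fun β => β ⊆ αᶜ ∧ p #β) | S ⊆ α ∪ β} = {β ∈ Icc (S \ α) αᶜ | p #β} := by
  ext β
  simp only [mem_filter, mem_univ, true_and, mem_Icc, sdiff_le_iff]
  tauto

end Finset

theorem stmt_12 {M : Type*} [AddCommMonoid M] (n : ℕ)
    (h : Finset (Fin n) → M) (α : Finset (Fin n)) (hα : Even αᶜ.card) :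
    (∑ θ ∈ (Finset.univ : Finset (Finset (Fin n))).filter
        (fun θ => θ ⊆ α ∧ Even θ.card), h (αᶜ ∪ θ)) +
    (∑ β ∈ (Finset.univ : Finset (Finset (Fin n))).filter
        (fun β => β ⊆ αᶜ ∧ Odd β.card),
      ∑ θ ∈ (Finset.univ : Finset (Finset (Fin n))).filter
        (fun θ => θ ⊆ α ∪ β ∧ Even θ.card), h θ) =
    (∑ β ∈ (Finset.univ : Finset (Finset (Fin n))).filter
        (fun β => β ⊆ αᶜ ∧ Even β.card),
      ∑ θ ∈ (Finset.univ : Finset (Finset (Fin n))).filter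
        (fun θ => θ ⊆ α ∪ β ∧ Even θ.card), h θ) := by
  rw [sum_filter_even_compl_union hα, sum_filter, sum_sum_filter_eq_sum_card_nsmul,
    sum_sum_filter_eq_sum_card_nsmul, ← sum_add_distrib]
  refine sum_congr rfl fun S _ => ?_
  by_cases hS : Even #S
  · simp only [hS, and_true, filter_filter_subset_union_eq_filter_Icc,
      card_filter_even_card_Icc hα, add_nsmul, sdiff_eq_inter_compl, inter_eq_right]
    split_ifs <;> simp [add_comm]
  · simp [hS]
end

section
/- Let M be a commutative monoid, h : {0,1}^n → M, and α ∈ {0,1}^n with |1−α| odd. Then Σ over even θ with 1−α ≤ θ ≤ 1 of h(θ), plus Σ over even β ≤ 1−α of (Σ over even θ ≤ α+β of h(θ)), equals Σ over odd β ≤ 1−α of (Σ over even θ ≤ α+β of h(θ)). -/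
open Finset

lemma parity_count_s13 {n : ℕ} (c d : Finset (Fin n)) (hdc : d ⊆ c) (hne : d ≠ c) :
    ((Finset.univ : Finset (Finset (Fin n))).filter
        (fun β => (β ⊆ c ∧ Odd β.card) ∧ d ⊆ β)).card =
    ((Finset.univ : Finset (Finset (Fin n))).filter
        (fun β => (β ⊆ c ∧ Even β.card) ∧ d ⊆ β)).card := by
  obtain ⟨x, hxc, hxd⟩ := Finset.exists_of_ssubset (hdc.ssubset_of_ne hne)
  have hmem : ∀ β : Finset (Fin n), β ⊆ c → d ⊆ β →
      ((if x ∈ β then β.erase x else insert x β) ⊆ c ∧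
        d ⊆ (if x ∈ β then β.erase x else insert x β)) := by
    intro β hβc hdβ
    split_ifs with hx
    · exact ⟨(erase_subset _ _).trans hβc,
        fun y hy => mem_erase.2 ⟨fun e => hxd (e ▸ hy), hdβ hy⟩⟩
    · exact ⟨insert_subset hxc hβc, hdβ.trans (subset_insert _ _)⟩
  have hinv : ∀ β : Finset (Fin n),
      (if x ∈ (if x ∈ β then β.erase x else insert x β) then
        (if x ∈ β then β.erase x else insert x β).erase x
      else insert x (if x ∈ β then β.erase x else insert x β)) = β := by
    intro β
    by_cases hx : x ∈ β
    · simp [hx, insert_erase]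
    · simp [hx, erase_insert]
  refine Finset.card_bij' (fun β _ => if x ∈ β then β.erase x else insert x β)
    (fun β _ => if x ∈ β then β.erase x else insert x β) ?_ ?_
    (fun β _ => hinv β) (fun β _ => hinv β)
  · intro β hβ
    simp only [mem_filter, mem_univ, true_and] at hβ ⊢
    obtain ⟨⟨hβc, hodd⟩, hdβ⟩ := hβ
    obtain ⟨h1, h2⟩ := hmem β hβc hdβ
    refine ⟨⟨h1, ?_⟩, h2⟩
    obtain ⟨k, hk⟩ := hodd
    split_ifs with hx
    · rw [card_erase_of_mem hx]; exact ⟨k, by omega⟩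
    · rw [card_insert_of_notMem hx]; exact ⟨k + 1, by omega⟩
  · intro β hβ
    simp only [mem_filter, mem_univ, true_and] at hβ ⊢
    obtain ⟨⟨hβc, heven⟩, hdβ⟩ := hβ
    obtain ⟨h1, h2⟩ := hmem β hβc hdβ
    refine ⟨⟨h1, ?_⟩, h2⟩
    obtain ⟨k, hk⟩ := heven
    split_ifs with hx
    · rw [card_erase_of_mem hx]
      have : 1 ≤ β.card := card_pos.2 ⟨x, hx⟩
      exact ⟨k - 1, by omega⟩
    · rw [card_insert_of_notMem hx]; exact ⟨k, by omega⟩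

lemma swap_sum_s13 {M : Type*} [AddCommMonoid M] {n : ℕ} (h : Finset (Fin n) → M)
    (B : Finset (Finset (Fin n))) (α : Finset (Fin n)) :
    ∑ β ∈ B, ∑ θ ∈ (Finset.univ : Finset (Finset (Fin n))).filter
        (fun θ => θ ⊆ α ∪ β ∧ Even θ.card), h θ =
    ∑ θ ∈ (Finset.univ : Finset (Finset (Fin n))),
      (B.filter (fun β => θ ⊆ α ∪ β ∧ Even θ.card)).card • h θ := by
  simp_rw [Finset.sum_filter]
  rw [Finset.sum_comm]
  refine Finset.sum_congr rfl fun θ _ => ?_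
  rw [← Finset.sum_filter, Finset.sum_const]

theorem stmt_13 {M : Type*} [AddCommMonoid M] (n : ℕ)
    (h : Finset (Fin n) → M) (α : Finset (Fin n)) (hα : Odd αᶜ.card) :
    (∑ θ ∈ (Finset.univ : Finset (Finset (Fin n))).filter
        (fun θ => αᶜ ⊆ θ ∧ Even θ.card), h θ) +
    (∑ β ∈ (Finset.univ : Finset (Finset (Fin n))).filter
        (fun β => β ⊆ αᶜ ∧ Even β.card),
      ∑ θ ∈ (Finset.univ : Finset (Finset (Fin n))).filter
        (fun θ => θ ⊆ α ∪ β ∧ Even θ.card), h θ) =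
    (∑ β ∈ (Finset.univ : Finset (Finset (Fin n))).filter
        (fun β => β ⊆ αᶜ ∧ Odd β.card),
      ∑ θ ∈ (Finset.univ : Finset (Finset (Fin n))).filter
        (fun θ => θ ⊆ α ∪ β ∧ Even θ.card), h θ) := by
  rw [swap_sum_s13 h _ α, swap_sum_s13 h _ α, Finset.sum_filter, ← Finset.sum_add_distrib]
  refine Finset.sum_congr rfl fun θ _ => ?_
  simp only [Finset.filter_filter]
  by_cases hev : Even θ.card
  · have hsub_iff : ∀ β : Finset (Fin n), θ ⊆ α ∪ β ↔ θ ∩ αᶜ ⊆ β := by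
      intro β
      constructor
      · intro H y hy
        obtain ⟨h1, h2⟩ := Finset.mem_inter.1 hy
        rcases Finset.mem_union.1 (H h1) with h' | h'
        · exact absurd h' (Finset.mem_compl.1 h2)
        · exact h'
      · intro H y hy
        by_cases hyα : y ∈ α
        · exact Finset.mem_union.2 (Or.inl hyα)
        · exact Finset.mem_union.2 (Or.inr (H (Finset.mem_inter.2 ⟨hy, Finset.mem_compl.2 hyα⟩)))
    by_cases hsub : αᶜ ⊆ θ
    · rw [if_pos ⟨hsub, hev⟩]
      have hNe : Finset.univ.filter
          (fun β => (β ⊆ αᶜ ∧ Even β.card) ∧ θ ⊆ α ∪ β ∧ Even θ.card) = ∅ := by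
        refine Finset.filter_false_of_mem fun β _ => ?_
        rintro ⟨⟨hβc, hβe⟩, hθ, -⟩
        have : β = αᶜ := Finset.Subset.antisymm hβc
          (fun y hy => (hsub_iff β).1 hθ (Finset.mem_inter.2 ⟨hsub hy, hy⟩))
        rw [this] at hβe
        exact (Nat.not_even_iff_odd.2 hα) hβe
      have hNo : Finset.univ.filter
          (fun β => (β ⊆ αᶜ ∧ Odd β.card) ∧ θ ⊆ α ∪ β ∧ Even θ.card) = {αᶜ} := by
        ext β
        simp only [Finset.mem_filter, Finset.mem_univ, true_and, Finset.mem_singleton]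
        constructor
        · rintro ⟨⟨hβc, -⟩, hθ, -⟩
          exact Finset.Subset.antisymm hβc
            (fun y hy => (hsub_iff β).1 hθ (Finset.mem_inter.2 ⟨hsub hy, hy⟩))
        · rintro rfl
          exact ⟨⟨Finset.Subset.refl _, hα⟩, (hsub_iff _).2 Finset.inter_subset_right, hev⟩
      rw [hNe, hNo]
      simp
    · rw [if_neg (fun H => hsub H.1)]
      have hdc : θ ∩ αᶜ ⊆ αᶜ := Finset.inter_subset_right
      have hne : θ ∩ αᶜ ≠ αᶜ := by
        intro H
        exact hsub (fun y hy => Finset.mem_inter.1 (H ▸ hy) |>.1)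
      have he : Finset.univ.filter
          (fun β => (β ⊆ αᶜ ∧ Even β.card) ∧ θ ⊆ α ∪ β ∧ Even θ.card) =
          Finset.univ.filter (fun β => (β ⊆ αᶜ ∧ Even β.card) ∧ θ ∩ αᶜ ⊆ β) := by
        refine Finset.filter_congr fun β _ => ?_
        rw [hsub_iff β]
        tauto
      have ho : Finset.univ.filter
          (fun β => (β ⊆ αᶜ ∧ Odd β.card) ∧ θ ⊆ α ∪ β ∧ Even θ.card) =
          Finset.univ.filter (fun β => (β ⊆ αᶜ ∧ Odd β.card) ∧ θ ∩ αᶜ ⊆ β) := by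
        refine Finset.filter_congr fun β _ => ?_
        rw [hsub_iff β]
        tauto
      rw [he, ho, parity_count_s13 αᶜ (θ ∩ αᶜ) hdc hne, zero_add]
  · rw [if_neg (fun H => hev H.2)]
    have empt : ∀ p : Finset (Fin n) → Prop, ∀ [DecidablePred p], Finset.univ.filter
        (fun β => p β ∧ θ ⊆ α ∪ β ∧ Even θ.card) = ∅ := fun p _ =>
      Finset.filter_false_of_mem fun β _ H => hev H.2.2
    rw [empt, empt]
    simp
end

section
/- Let (M, d, +) be a metric semigroup and f : I → M a map on a rectangle I = [a₁,b₁] × ⋯ × [aₙ,bₙ] ⊂ ℝⁿ with a < b componentwise. For x, y ∈ I with x < y componentwise, define md_n(f, I_x^y) = d( Σ over θ ∈ {0,1}^n with |θ| even of f(x + θ(y−x)), Σ over θ ∈ {0,1}^n with |θ| odd of f(x + θ(y−x)) ), where θ(y−x) is the componentwise product. Then for any x' ∈ ℝⁿ with x ≤ x' ≤ y: md_n(f, I_x^y) ≤ Σ over α ∈ {0,1}^n of md_n(f, I_{x+α(x'−x)}^{x'+α(y−x')}), where rectangles that degenerate (some coordinate of the lower corner equals that of the upper corner) contribute md_n = 0.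 -/
open scoped symmDiff

private lemma aux_dist_add_add_le {M : Type*} [MetricSpace M] [AddCommMonoid M]
    (hd : ∀ u v w : M, dist (u + w) (v + w) = dist u v) (a b c d : M) :
    dist (a + b) (c + d) ≤ dist a c + dist b d := by
  calc dist (a + b) (c + d) ≤ dist (a + b) (c + b) + dist (c + b) (c + d) :=
        dist_triangle _ _ _
    _ = dist a c + dist b d := by
        rw [hd a c b, add_comm c b, add_comm c d, hd b d c]

private lemma aux_dist_sum_sum_le {ι M : Type*} [MetricSpace M] [AddCommMonoid M]
    (hd : ∀ u v w : M, dist (u + w) (v + w) = dist u v)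
    (s : Finset ι) (g h : ι → M) :
    dist (∑ i ∈ s, g i) (∑ i ∈ s, h i) ≤ ∑ i ∈ s, dist (g i) (h i) := by
  induction s using Finset.cons_induction with
  | empty => simp
  | cons a s hi ih =>
    rw [Finset.sum_cons, Finset.sum_cons, Finset.sum_cons]
    exact (aux_dist_add_add_le hd _ _ _ _).trans (add_le_add le_rfl ih)

private lemma aux_sd_nonempty {ι : Type*} [DecidableEq ι] {s t : Finset ι} (h : s ≠ t) :
    (s ∆ t).Nonempty := by
  rw [Finset.nonempty_iff_ne_empty]
  intro hc
  exact h (symmDiff_eq_bot.mp hc)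

private lemma aux_toggle_toggle {ι : Type*} [DecidableEq ι] (s : Finset ι) (t : ι) :
    (s ∆ {t}) ∆ {t} = s := by
  ext a; simp [Finset.mem_symmDiff]

private lemma aux_sd_toggle {ι : Type*} [DecidableEq ι] (s u : Finset ι) (t : ι) :
    (s ∆ {t}) ∆ (u ∆ {t}) = s ∆ u := by
  ext a; simp only [Finset.mem_symmDiff, Finset.mem_singleton]; tauto

private lemma aux_toggle_parity {ι : Type*} [DecidableEq ι] (s : Finset ι) (t : ι) :
    Odd s.card ↔ Even ((s ∆ {t}).card) := by
  by_cases h : t ∈ s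
  · have hst : s ∆ {t} = s.erase t := by
      ext a; by_cases hat : a = t <;> simp_all [Finset.mem_symmDiff]
    have h1 : (s.erase t).card + 1 = s.card := Finset.card_erase_add_one h
    rw [hst, Nat.odd_iff, Nat.even_iff]; omega
  · have hst : s ∆ {t} = insert t s := by
      ext a; by_cases hat : a = t <;> simp_all [Finset.mem_symmDiff]
    rw [hst, Finset.card_insert_of_notMem h, Nat.odd_iff, Nat.even_iff]; omega

/-- The parity-swapping involution: toggle the least element of the symmetric
difference of the two components in both components. -/
private noncomputable def tog {ι : Type*} [DecidableEq ι] [LinearOrder ι]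
    (p : Finset ι × Finset ι) : Finset ι × Finset ι :=
  if h : p.1 = p.2 then p
  else
    let t := (p.1 ∆ p.2).min' (aux_sd_nonempty h)
    (p.1 ∆ {t}, p.2 ∆ {t})

private lemma tog_def {ι : Type*} [DecidableEq ι] [LinearOrder ι]
    {p : Finset ι × Finset ι} (h : p.1 ≠ p.2) :
    tog p = (p.1 ∆ {(p.1 ∆ p.2).min' (aux_sd_nonempty h)},
             p.2 ∆ {(p.1 ∆ p.2).min' (aux_sd_nonempty h)}) := by
  rw [tog, dif_neg h]

private lemma tog_sd {ι : Type*} [DecidableEq ι] [LinearOrder ι]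
    {p : Finset ι × Finset ι} (h : p.1 ≠ p.2) :
    (tog p).1 ∆ (tog p).2 = p.1 ∆ p.2 := by
  rw [tog_def h]
  exact aux_sd_toggle _ _ _

private lemma tog_ne {ι : Type*} [DecidableEq ι] [LinearOrder ι]
    {p : Finset ι × Finset ι} (h : p.1 ≠ p.2) : (tog p).1 ≠ (tog p).2 := by
  intro hc
  have : ((tog p).1 ∆ (tog p).2).Nonempty := by
    rw [tog_sd h]; exact aux_sd_nonempty h
  rw [hc] at this
  simp [symmDiff_self] at this

private lemma tog_tog {ι : Type*} [DecidableEq ι] [LinearOrder ι]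
    {p : Finset ι × Finset ι} (h : p.1 ≠ p.2) : tog (tog p) = p := by
  have h2 := tog_ne h
  rw [tog_def h2]
  have hmin : ((tog p).1 ∆ (tog p).2).min' (aux_sd_nonempty h2)
      = (p.1 ∆ p.2).min' (aux_sd_nonempty h) := by
    congr 1
    exact tog_sd h
  rw [hmin, tog_def h]
  ext a <;> simp [aux_toggle_toggle]

private lemma swap_parity_sum {n : ℕ} {M : Type*} [AddCommMonoid M]
    (F : Finset (Fin n) × Finset (Fin n) → M)
    (hF : ∀ p : Finset (Fin n) × Finset (Fin n), ∀ t ∈ p.1 ∆ p.2,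
      F (p.1 ∆ {t}, p.2 ∆ {t}) = F p) :
    ∑ p ∈ (Finset.univ ×ˢ Finset.univ).filter
        (fun p : Finset (Fin n) × Finset (Fin n) => p.1 ≠ p.2 ∧ Even p.2.card), F p
  = ∑ p ∈ (Finset.univ ×ˢ Finset.univ).filter
        (fun p : Finset (Fin n) × Finset (Fin n) => p.1 ≠ p.2 ∧ Odd p.2.card), F p := by
  refine Finset.sum_nbij' (i := tog) (j := tog) ?_ ?_ ?_ ?_ ?_
  · intro p hp
    rw [Finset.mem_filter] at hp ⊢
    obtain ⟨-, hne, hev⟩ := hp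
    refine ⟨by simp, tog_ne hne, ?_⟩
    rw [tog_def hne]
    have := (aux_toggle_parity p.2 ((p.1 ∆ p.2).min' (aux_sd_nonempty hne))).not
    rw [Nat.not_odd_iff_even, Nat.not_even_iff_odd] at this
    exact this.mp hev
  · intro p hp
    rw [Finset.mem_filter] at hp ⊢
    obtain ⟨-, hne, hod⟩ := hp
    refine ⟨by simp, tog_ne hne, ?_⟩
    rw [tog_def hne]
    exact (aux_toggle_parity p.2 _).mp hod
  · intro p hp
    rw [Finset.mem_filter] at hp
    exact tog_tog hp.2.1
  · intro p hp
    rw [Finset.mem_filter] at hp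
    exact tog_tog hp.2.1
  · intro p hp
    rw [Finset.mem_filter] at hp
    obtain ⟨-, hne, -⟩ := hp
    rw [tog_def hne]
    exact (hF p _ ((p.1 ∆ p.2).min'_mem (aux_sd_nonempty hne))).symm

private lemma split_sum_s17 {n : ℕ} {M : Type*} [AddCommMonoid M]
    (F : Finset (Fin n) × Finset (Fin n) → M)
    (P : ℕ → Prop) [DecidablePred P] :
    ∑ α : Finset (Fin n),
      ∑ θ ∈ Finset.univ.filter (fun θ : Finset (Fin n) => P θ.card), F (α, θ)
  = (∑ θ ∈ Finset.univ.filter (fun θ : Finset (Fin n) => P θ.card), F (θ, θ))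
    + ∑ p ∈ (Finset.univ ×ˢ Finset.univ).filter
        (fun p : Finset (Fin n) × Finset (Fin n) => p.1 ≠ p.2 ∧ P p.2.card), F p := by
  have h1 : ∀ α : Finset (Fin n),
      ∑ θ ∈ Finset.univ.filter (fun θ : Finset (Fin n) => P θ.card), F (α, θ)
      = ∑ θ : Finset (Fin n), if P θ.card then F (α, θ) else 0 := by
    intro α; rw [Finset.sum_filter]
  simp only [h1]
  have h2 : ∑ p ∈ (Finset.univ ×ˢ Finset.univ).filter
        (fun p : Finset (Fin n) × Finset (Fin n) => p.1 ≠ p.2 ∧ P p.2.card), F p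
      = ∑ α : Finset (Fin n), ∑ θ : Finset (Fin n),
          if α ≠ θ ∧ P θ.card then F (α, θ) else 0 := by
    rw [Finset.sum_filter, Finset.sum_product]
  have h3 : ∑ θ ∈ Finset.univ.filter (fun θ : Finset (Fin n) => P θ.card), F (θ, θ)
      = ∑ α : Finset (Fin n), ∑ θ : Finset (Fin n),
          if α = θ ∧ P θ.card then F (α, θ) else 0 := by
    rw [Finset.sum_filter]
    refine Finset.sum_congr rfl fun α _ => ?_
    have : ∀ θ : Finset (Fin n), (if α = θ ∧ P θ.card then F (α, θ) else 0)
        = if α = θ then (if P θ.card then F (θ, θ) else 0) else 0 := by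
      intro θ
      by_cases hαθ : α = θ <;> by_cases hP : P θ.card <;> simp [hαθ, hP]
    simp only [this]
    rw [Finset.sum_ite_eq]
    simp
  rw [h2, h3, ← Finset.sum_add_distrib]
  refine Finset.sum_congr rfl fun α _ => ?_
  rw [← Finset.sum_add_distrib]
  refine Finset.sum_congr rfl fun θ _ => ?_
  by_cases hαθ : α = θ <;> by_cases hP : P θ.card <;> simp [hαθ, hP]

/-- The Vitali-type `n`-th mixed difference of `f` over the rectangle with
corners `x` and `y`: the distance between the sum of `f` over the vertices
`x + θ(y−x)` of even weight and the sum over the vertices of odd weight,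
where a vertex corresponding to `θ ∈ {0,1}ⁿ` (encoded as a `Finset (Fin n)`)
has `i`-th coordinate `y i` if `i ∈ θ` and `x i` otherwise. -/
noncomputable def mdn {n : ℕ} {M : Type*} [MetricSpace M] [AddCommMonoid M]
    (f : (Fin n → ℝ) → M) (x y : Fin n → ℝ) : ℝ :=
  dist
    (∑ θ ∈ (Finset.univ : Finset (Finset (Fin n))).filter (fun θ => Even θ.card),
      f (fun i => if i ∈ θ then y i else x i))
    (∑ θ ∈ (Finset.univ : Finset (Finset (Fin n))).filter (fun θ => Odd θ.card),
      f (fun i => if i ∈ θ then y i else x i))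

theorem stmt_17 {n : ℕ} {M : Type*} [MetricSpace M] [AddCommMonoid M]
    (hd : ∀ u v w : M, dist (u + w) (v + w) = dist u v)
    (f : (Fin n → ℝ) → M) (x y x' : Fin n → ℝ)
    (hxy : ∀ i, x i < y i) (hx' : ∀ i, x i ≤ x' i ∧ x' i ≤ y i) :
    mdn f x y ≤
      ∑ α ∈ (Finset.univ : Finset (Finset (Fin n))),
        mdn f (fun i => if i ∈ α then x' i else x i)
              (fun i => if i ∈ α then y i else x' i) := by
  classical
  -- the vertex of subrectangle `α` corresponding to `θ`
  set g : Finset (Fin n) × Finset (Fin n) → (Fin n → ℝ) := fun p i =>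
    if i ∈ p.2 then (if i ∈ p.1 then y i else x' i)
    else (if i ∈ p.1 then x' i else x i) with hg
  have hgdiag : ∀ θ : Finset (Fin n), g (θ, θ) = fun i => if i ∈ θ then y i else x i := by
    intro θ; funext i; by_cases h : i ∈ θ <;> simp [hg, h]
  -- invariance of the vertex under toggling an element of the symmetric difference
  have hginv : ∀ p : Finset (Fin n) × Finset (Fin n), ∀ t ∈ p.1 ∆ p.2,
      f (g (p.1 ∆ {t}, p.2 ∆ {t})) = f (g p) := by
    intro p t ht
    congr 1
    funext i
    by_cases hit : i = t
    · subst hit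
      rw [Finset.mem_symmDiff] at ht
      rcases ht with ⟨h1, h2⟩ | ⟨h1, h2⟩ <;> simp [hg, Finset.mem_symmDiff, h1, h2]
    · have h1 : i ∈ p.1 ∆ {t} ↔ i ∈ p.1 := by simp [Finset.mem_symmDiff, hit]
      have h2 : i ∈ p.2 ∆ {t} ↔ i ∈ p.2 := by simp [Finset.mem_symmDiff, hit]
      simp only [hg, h1, h2]
  -- mdn of a subrectangle, rewritten via `g`
  have hmdn : ∀ α : Finset (Fin n),
      mdn f (fun i => if i ∈ α then x' i else x i) (fun i => if i ∈ α then y i else x' i)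
      = dist
          (∑ θ ∈ Finset.univ.filter (fun θ : Finset (Fin n) => Even θ.card), f (g (α, θ)))
          (∑ θ ∈ Finset.univ.filter (fun θ : Finset (Fin n) => Odd θ.card), f (g (α, θ))) := by
    intro α
    rfl
  have hE := split_sum_s17 (fun p => f (g p)) Even
  have hO := split_sum_s17 (fun p => f (g p)) Odd
  have hswap := swap_parity_sum (fun p => f (g p)) hginv
  calc mdn f x y
      = dist
          (∑ α : Finset (Fin n),
            ∑ θ ∈ Finset.univ.filter (fun θ : Finset (Fin n) => Even θ.card), f (g (α, θ)))
          (∑ α : Finset (Fin n),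
            ∑ θ ∈ Finset.univ.filter (fun θ : Finset (Fin n) => Odd θ.card), f (g (α, θ))) := by
        rw [hE, hO, ← hswap, hd]
        unfold mdn
        simp only [hgdiag]
    _ ≤ ∑ α : Finset (Fin n),
          dist
            (∑ θ ∈ Finset.univ.filter (fun θ : Finset (Fin n) => Even θ.card), f (g (α, θ)))
            (∑ θ ∈ Finset.univ.filter (fun θ : Finset (Fin n) => Odd θ.card), f (g (α, θ))) :=
        aux_dist_sum_sum_le hd _ _ _
    _ = _ := by
        refine Finset.sum_congr rfl fun α _ => ?_
        rw [hmdn]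
end
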